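/- arXiv:2211.03132 — 4 statements merged into one kernel-verified Lean document; each statement's English description precedes it below -/
import Mathlib

section
/- Let P_B, P, σ² be positive reals and define h(x) = [(P_B·x + P·σ²)·(x + σ²)] / [((P_B + P)·x + P·σ²)·σ²]. Then h is strictly monotonically increasing on the interval [0, ∞), and hence so is x ↦ log₂(h(x)). -/
/-- The function `h(x) = ((P_B x + P σ²)(x + σ²)) / (((P_B+P)x + P σ²) σ²)` is
strictly increasing on `[0, ∞)`, and so is `log₂ ∘ h` (writing `s` for `σ²`). -/
theorem stmt_1 (PB P s : ℝ) (hPB : 0 < PB) (hP : 0 < P) (hs : 0 < s)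
    (h : ℝ → ℝ)
    (hh : ∀ x, h x = ((PB * x + P * s) * (x + s)) / (((PB + P) * x + P * s) * s)) :
    StrictMonoOn h (Set.Ici 0) ∧
      StrictMonoOn (fun x => Real.logb 2 (h x)) (Set.Ici 0) := by
  have hden : ∀ x : ℝ, 0 ≤ x → 0 < ((PB + P) * x + P * s) * s := by
    intro x hx
    have : 0 < (PB + P) * x + P * s := by nlinarith
    exact mul_pos this hs
  have hnum : ∀ x : ℝ, 0 ≤ x → 0 < (PB * x + P * s) * (x + s) := by
    intro x hx
    have h1 : 0 < PB * x + P * s := by nlinarith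
    have h2 : 0 < x + s := by linarith
    exact mul_pos h1 h2
  have hpos : ∀ x : ℝ, 0 ≤ x → 0 < h x := by
    intro x hx
    rw [hh]
    exact div_pos (hnum x hx) (hden x hx)
  have hmono : StrictMonoOn h (Set.Ici 0) := by
    intro a ha b hb hab
    simp only [Set.mem_Ici] at ha hb
    rw [hh, hh, div_lt_div_iff₀ (hden a ha) (hden b hb)]
    have key : (PB * b + P * s) * (b + s) * (((PB + P) * a + P * s) * s)
        - (PB * a + P * s) * (a + s) * (((PB + P) * b + P * s) * s)
        = (b - a) * PB * ((PB + P) * (a * b) + P * s * (a + b)) * s := by ring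
    have hinner : 0 < (PB + P) * (a * b) + P * s * (a + b) := by
      have hb' : 0 < b := lt_of_le_of_lt ha hab
      nlinarith [mul_nonneg ha hb, mul_pos hP hs]
    nlinarith [mul_pos (mul_pos (mul_pos (sub_pos.mpr hab) hPB) hinner) hs]
  refine ⟨hmono, ?_⟩
  intro a ha b hb hab
  have := hmono ha hb hab
  exact Real.logb_lt_logb one_lt_two (hpos a ha) this
end

section
/- Let P_B, P, σ² be positive reals and g_e ≥ 0 a fixed real. Define, for g_u ≥ 0, R(g_u) = log₂([(P_B·g_u·g_e + (P_B·g_u + g_e·P)·σ² + P·σ⁴)·(g_u·g_e + (g_u + g_e)·σ² + σ⁴)] / [((P_B + P)·(g_u·g_e + (g_u + g_e)·σ² + σ⁴) − P_B·σ²·(g_e + σ²))·(g_e + σ²)·σ²]). Then R is strictly monotonically increasing on [0, ∞). -/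
/-- The closed-form KGR (with independent eavesdropping channels, `g_ue = 0`) is
strictly increasing as a function of the legitimate gain `g_u` on `[0, ∞)`
(writing `s` for `σ²`). -/
theorem stmt_2 (PB P s ge : ℝ) (hPB : 0 < PB) (hP : 0 < P) (hs : 0 < s)
    (hge : 0 ≤ ge) (R : ℝ → ℝ)
    (hR : ∀ gu, R gu = Real.logb 2
      (((PB * gu * ge + (PB * gu + ge * P) * s + P * s ^ 2) *
          (gu * ge + (gu + ge) * s + s ^ 2)) /
        (((PB + P) * (gu * ge + (gu + ge) * s + s ^ 2) - PB * s * (ge + s)) *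
          (ge + s) * s))) :
    StrictMonoOn R (Set.Ici 0) := by
  have hgs : 0 < ge + s := by linarith
  intro a ha b hb hab
  simp only [Set.mem_Ici] at ha hb
  rw [hR a, hR b]
  have hN : ∀ x : ℝ, 0 ≤ x →
      (PB * x * ge + (PB * x + ge * P) * s + P * s ^ 2) *
        (x * ge + (x + ge) * s + s ^ 2) = (ge + s) ^ 2 * (PB * x + P * s) * (x + s) := by
    intro x _; ring
  have hD : ∀ x : ℝ,
      ((PB + P) * (x * ge + (x + ge) * s + s ^ 2) - PB * s * (ge + s)) *
        (ge + s) * s = (ge + s) ^ 2 * ((PB + P) * x + P * s) * s := by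
    intro x; ring
  have hNpos : ∀ x : ℝ, 0 ≤ x → 0 < (ge + s) ^ 2 * (PB * x + P * s) * (x + s) := by
    intro x hx
    have : 0 < PB * x + P * s := by nlinarith
    have : 0 < x + s := by linarith
    positivity
  have hDpos : ∀ x : ℝ, 0 ≤ x → 0 < (ge + s) ^ 2 * ((PB + P) * x + P * s) * s := by
    intro x hx
    have : 0 < (PB + P) * x + P * s := by nlinarith
    positivity
  apply Real.logb_lt_logb one_lt_two
  · rw [hN a ha, hD a]
    exact div_pos (hNpos a ha) (hDpos a ha)
  · rw [hN a ha, hD a, hN b hb, hD b]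
    rw [div_lt_div_iff₀ (hDpos a ha) (hDpos b hb)]
    have h1 : 0 < (ge + s) ^ 4 * s * PB * (b - a) * ((PB + P) * a * b + P * s * (a + b)) := by
      have hab' : 0 < b - a := by linarith
      have hb0 : 0 < b := lt_of_le_of_lt ha hab
      have h2 : 0 < (PB + P) * a * b + P * s * (a + b) := by
        nlinarith [mul_pos hP hs, mul_nonneg ha hb0.le, mul_pos (mul_pos hP hs) hb0]
      positivity
    nlinarith [h1]
end

section
/- Let 0 ≤ ρ < 1 and let N_H, N_V be positive integers. Let R_h be the N_H×N_H real symmetric matrix with entries [R_h]_{i,j} = ρ^{|i−j|} and R_v the N_V×N_V real symmetric matrix with entries [R_v]_{i,j} = ρ^{|i−j|}. Then the largest eigenvalue of the Kronecker product R_h ⊗ R_v satisfies λ_max(R_h ⊗ R_v) ≥ [(N_H·(1−ρ²) − 2ρ·(1−ρ^{N_H}))·(N_V·(1−ρ²) − 2ρ·(1−ρ^{N_V}))] / [N_H·N_V·(1−ρ)⁴]. -/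
open Matrix Finset

lemma myVecMulStar {n : Type*} [Fintype n] (U : Matrix n n ℝ) (x : n → ℝ) :
    x ᵥ* U = star U *ᵥ x := by
  ext j
  simp [vecMul, mulVec, dotProduct, Matrix.star_apply, mul_comm]

lemma myRayleigh {n : Type*} [Fintype n] [Nonempty n] [DecidableEq n]
    (A : Matrix n n ℝ) (hA : A.IsHermitian) (x : n → ℝ) :
    x ⬝ᵥ (A *ᵥ x) ≤ (Finset.univ.sup' Finset.univ_nonempty hA.eigenvalues) * (x ⬝ᵥ x) := by
  set U : Matrix n n ℝ := (hA.eigenvectorUnitary : Matrix n n ℝ) with hU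
  set y : n → ℝ := star U *ᵥ x with hy
  have hUU : U * star U = 1 := Unitary.mul_star_self_of_mem hA.eigenvectorUnitary.2
  have hxy : x ⬝ᵥ x = y ⬝ᵥ y := by
    rw [hy, dotProduct_mulVec, myVecMulStar, star_star, mulVec_mulVec, hUU, one_mulVec]
  have hquad : x ⬝ᵥ (A *ᵥ x) = ∑ i, hA.eigenvalues i * (y i)^2 := by
    conv_lhs => rw [hA.spectral_theorem, Unitary.conjStarAlgAut_apply]
    rw [← mulVec_mulVec, ← mulVec_mulVec, dotProduct_mulVec, myVecMulStar]
    simp only [← hU, ← hy]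
    simp [dotProduct, mulVec_diagonal, Function.comp]
    ring_nf
    congr 1 <;> ext i <;> ring
  rw [hquad, hxy]
  calc ∑ i, hA.eigenvalues i * (y i)^2
      ≤ ∑ i, (Finset.univ.sup' Finset.univ_nonempty hA.eigenvalues) * (y i)^2 :=
        Finset.sum_le_sum fun i _ => mul_le_mul_of_nonneg_right
          (Finset.le_sup' _ (Finset.mem_univ i)) (sq_nonneg _)
    _ = (Finset.univ.sup' Finset.univ_nonempty hA.eigenvalues) * (y ⬝ᵥ y) := by
        simp [dotProduct, Finset.mul_sum, sq]

open Finset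

lemma myT (ρ : ℝ) (N : ℕ) :
    ∑ i ∈ Finset.range N, ρ ^ (N - i) = ρ * ∑ k ∈ Finset.range N, ρ ^ k := by
  rw [← Finset.sum_range_reflect (fun i => ρ ^ (N - i)) N, Finset.mul_sum]
  apply Finset.sum_congr rfl
  intro i hi
  rw [Finset.mem_range] at hi
  rw [← pow_succ']
  congr 1
  omega

lemma mySum (ρ : ℝ) (N : ℕ) :
    (∑ i ∈ Finset.range N, ∑ j ∈ Finset.range N, ρ ^ (Nat.dist i j)) * (1 - ρ) ^ 2
      = N * (1 - ρ ^ 2) - 2 * ρ * (1 - ρ ^ N) := by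
  induction N with
  | zero => simp
  | succ N ih =>
    have hg := geom_sum_mul ρ N
    have hsplit : ∑ i ∈ Finset.range (N + 1), ∑ j ∈ Finset.range (N + 1), ρ ^ (Nat.dist i j)
        = (∑ i ∈ Finset.range N, ∑ j ∈ Finset.range N, ρ ^ (Nat.dist i j))
          + 2 * (ρ * ∑ k ∈ Finset.range N, ρ ^ k) + 1 := by
      rw [Finset.sum_range_succ]
      simp only [Finset.sum_range_succ]
      rw [Finset.sum_add_distrib]
      have h1 : ∀ i ∈ Finset.range N, ρ ^ (Nat.dist i N) = ρ ^ (N - i) := by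
        intro i hi
        rw [Finset.mem_range] at hi
        rw [Nat.dist_eq_sub_of_le (le_of_lt hi)]
      have h2 : ∀ j ∈ Finset.range N, ρ ^ (Nat.dist N j) = ρ ^ (N - j) := by
        intro j hj
        rw [Finset.mem_range] at hj
        rw [Nat.dist_comm, Nat.dist_eq_sub_of_le (le_of_lt hj)]
      rw [Finset.sum_congr rfl h1, Finset.sum_congr rfl h2, myT, Nat.dist_self, pow_zero]
      ring
    rw [hsplit]
    push_cast
    linear_combination ih - 2 * ρ * (1 - ρ) * hg


open scoped Kronecker in
/-- Lower bound on the largest eigenvalue of the Kronecker product of two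
Toeplitz correlation matrices with entries `ρ^{|i−j|}` (Lemma 4, lower bound,
with `P_A` normalized to 1). -/
theorem stmt_13 (ρ : ℝ) (hρ0 : 0 ≤ ρ) (hρ1 : ρ < 1)
    (NH NV : ℕ) (hNH : 0 < NH) (hNV : 0 < NV)
    (Rh : Matrix (Fin NH) (Fin NH) ℝ) (hRh : ∀ i j, Rh i j = ρ ^ (Nat.dist i.1 j.1))
    (Rv : Matrix (Fin NV) (Fin NV) ℝ) (hRv : ∀ i j, Rv i j = ρ ^ (Nat.dist i.1 j.1)) :
    ∃ hH : (Rh ⊗ₖ Rv).IsHermitian,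
      (((NH : ℝ) * (1 - ρ ^ 2) - 2 * ρ * (1 - ρ ^ NH)) *
          ((NV : ℝ) * (1 - ρ ^ 2) - 2 * ρ * (1 - ρ ^ NV))) /
          ((NH : ℝ) * (NV : ℝ) * (1 - ρ) ^ 4)
        ≤ Finset.univ.sup'
            ⟨((⟨0, hNH⟩ : Fin NH), (⟨0, hNV⟩ : Fin NV)), Finset.mem_univ _⟩
            hH.eigenvalues := by
  haveI : Nonempty (Fin NH) := ⟨⟨0, hNH⟩⟩
  haveI : Nonempty (Fin NV) := ⟨⟨0, hNV⟩⟩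
  have hH : (Rh ⊗ₖ Rv).IsHermitian := by
    ext ⟨i, k⟩ ⟨j, l⟩
    simp [Matrix.conjTranspose_apply, Matrix.kroneckerMap_apply, hRh, hRv, Nat.dist_comm]
  refine ⟨hH, ?_⟩
  set M := Finset.univ.sup'
      (⟨((⟨0, hNH⟩ : Fin NH), (⟨0, hNV⟩ : Fin NV)), Finset.mem_univ _⟩ :
        (Finset.univ : Finset (Fin NH × Fin NV)).Nonempty) hH.eigenvalues with hM
  have key := myRayleigh (Rh ⊗ₖ Rv) hH (fun _ => (1 : ℝ))
  -- quadratic form at all-ones vector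
  have hconv : ∀ (N : ℕ) (R : Matrix (Fin N) (Fin N) ℝ),
      (∀ i j, R i j = ρ ^ (Nat.dist i.1 j.1)) →
      ∑ i : Fin N, ∑ j : Fin N, R i j
        = ∑ i ∈ Finset.range N, ∑ j ∈ Finset.range N, ρ ^ (Nat.dist i j) := by
    intro N R hR
    simp only [hR]
    rw [Fin.sum_univ_eq_sum_range (fun i => ∑ j : Fin N, ρ ^ (Nat.dist i j.1)) N]
    exact Finset.sum_congr rfl fun i _ =>
      Fin.sum_univ_eq_sum_range (fun j => ρ ^ (Nat.dist i j)) N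
  have hq : ((fun _ => (1 : ℝ)) ⬝ᵥ ((Rh ⊗ₖ Rv) *ᵥ fun _ => (1 : ℝ)))
      = (∑ i : Fin NH, ∑ j : Fin NH, Rh i j) * (∑ k : Fin NV, ∑ l : Fin NV, Rv k l) := by
    simp only [dotProduct, Matrix.mulVec, one_mul, mul_one, Matrix.kroneckerMap_apply,
      Fintype.sum_prod_type, Finset.sum_mul_sum]
  have hcard : ((fun _ => (1 : ℝ)) ⬝ᵥ (fun (_ : Fin NH × Fin NV) => (1 : ℝ)))
      = (NH : ℝ) * (NV : ℝ) := by
    simp [dotProduct]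
  rw [hq, hcard, hconv NH Rh hRh, hconv NV Rv hRv] at key
  have hH' := mySum ρ NH
  have hV' := mySum ρ NV
  have hpos : (0 : ℝ) < (NH : ℝ) * (NV : ℝ) * (1 - ρ) ^ 4 := by
    have : (0 : ℝ) < 1 - ρ := by linarith
    positivity
  rw [div_le_iff₀ hpos]
  calc ((NH : ℝ) * (1 - ρ ^ 2) - 2 * ρ * (1 - ρ ^ NH)) *
          ((NV : ℝ) * (1 - ρ ^ 2) - 2 * ρ * (1 - ρ ^ NV))
      = ((∑ i ∈ Finset.range NH, ∑ j ∈ Finset.range NH, ρ ^ (Nat.dist i j)) *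
          (∑ i ∈ Finset.range NV, ∑ j ∈ Finset.range NV, ρ ^ (Nat.dist i j))) * (1 - ρ) ^ 4 := by
        rw [← hH', ← hV']; ring
    _ ≤ (M * ((NH : ℝ) * (NV : ℝ))) * (1 - ρ) ^ 4 := by
        apply mul_le_mul_of_nonneg_right key (by positivity)
    _ = M * ((NH : ℝ) * (NV : ℝ) * (1 - ρ) ^ 4) := by ring
end

section
/- Let 0 ≤ ρ < 1 and define, for each positive integer N, s_N = (N·(1−ρ²) − 2ρ·(1−ρᴺ)) / (N·(1−ρ)²). Then the sequence (s_N)_{N≥1} is monotonically nondecreasing in N. -/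
lemma key_stmt15 (ρ : ℝ) (hρ0 : 0 ≤ ρ) (N : ℕ) :
    ((N : ℝ) + 1) * ρ ^ N ≤ 1 + (N : ℝ) * ρ ^ (N + 1) := by
  induction N with
  | zero => simp
  | succ n ih =>
    have hp : (0 : ℝ) ≤ ((n : ℝ) + 1) * ρ ^ n * (1 - ρ) ^ 2 :=
      mul_nonneg (mul_nonneg (by positivity) (pow_nonneg hρ0 n)) (sq_nonneg _)
    push_cast
    rw [pow_succ, pow_succ, pow_succ] at *
    nlinarith [ih, hp]

lemma step_stmt15 (ρ : ℝ) (hρ0 : 0 ≤ ρ) (hρ1 : ρ < 1) (s : ℕ → ℝ)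
    (hs : ∀ N : ℕ, s N =
      ((N : ℝ) * (1 - ρ ^ 2) - 2 * ρ * (1 - ρ ^ N)) / ((N : ℝ) * (1 - ρ) ^ 2))
    (N : ℕ) (hN : 1 ≤ N) : s N ≤ s (N + 1) := by
  rw [hs N, hs (N + 1)]
  have hNR : (1 : ℝ) ≤ (N : ℝ) := by exact_mod_cast hN
  have hd1 : (0 : ℝ) < (N : ℝ) * (1 - ρ) ^ 2 := by
    exact mul_pos (by linarith) (pow_pos (by linarith : (0:ℝ) < 1 - ρ) 2)
  have hd2 : (0 : ℝ) < ((N + 1 : ℕ) : ℝ) * (1 - ρ) ^ 2 := by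
    push_cast; exact mul_pos (by linarith) (pow_pos (by linarith : (0:ℝ) < 1 - ρ) 2)
  rw [div_le_div_iff₀ hd1 hd2]
  have hk := key_stmt15 ρ hρ0 N
  have hkk : (0 : ℝ) ≤ ρ * (1 - ρ) ^ 2 * (1 + (N : ℝ) * ρ ^ (N + 1) - ((N : ℝ) + 1) * ρ ^ N) :=
    mul_nonneg (mul_nonneg hρ0 (sq_nonneg _)) (by linarith)
  push_cast
  nlinarith [hkk]

/-- The average entry `s_N = (N(1−ρ²) − 2ρ(1−ρᴺ))/(N(1−ρ)²)` of the `N×N`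
Toeplitz correlation matrix is nondecreasing in `N ≥ 1`. -/
theorem stmt_15 (ρ : ℝ) (hρ0 : 0 ≤ ρ) (hρ1 : ρ < 1) (s : ℕ → ℝ)
    (hs : ∀ N : ℕ, s N =
      ((N : ℝ) * (1 - ρ ^ 2) - 2 * ρ * (1 - ρ ^ N)) / ((N : ℝ) * (1 - ρ) ^ 2)) :
    ∀ m n : ℕ, 1 ≤ m → m ≤ n → s m ≤ s n := by
  intro m n hm hmn
  induction n with
  | zero => omega
  | succ n ih =>
    rcases eq_or_lt_of_le hmn with h | h
    · rw [h]
    · have hmn' : m ≤ n := Nat.lt_succ_iff.mp h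
      exact (ih hmn').trans (step_stmt15 ρ hρ0 hρ1 s hs n (le_trans hm hmn'))
end
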